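/- Let (X,Y) be an exactly 3-separating partition of a 3-connected matroid M with |Y| ≥ 3, and let e ∈ Y. Then (X ∪ {e}, Y − {e}) is exactly 3-separating if and only if e lies in cl(X) ∩ cl(Y−e) or in cl*(X) ∩ cl*(Y−e). -/

import Mathlib

open Set

namespace PaperDefs

variable {α : Type*}

/-- The rank of a set `X` in a matroid `M`, as an extended natural number:
the supremum of the cardinalities of independent subsets of `X`. -/
noncomputable def eRk (M : Matroid α) (X : Set α) : ℕ∞ :=
  ⨆ I ∈ {I | M.Indep I ∧ I ⊆ X}, I.encard

/-- Deletion of a set of elements from a matroid. -/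
def del (M : Matroid α) (D : Set α) : Matroid α := M.restrict (M.E \ D)

/-- Contraction of a set of elements in a matroid. -/
def con (M : Matroid α) (C : Set α) : Matroid α := (del M✶ C)✶

/-- A circuit: a minimal dependent set. -/
def Circuit (M : Matroid α) (C : Set α) : Prop :=
  M.Dep C ∧ ∀ D, D ⊂ C → M.Indep D

/-- A `k`-separation of `M`: a partition `(X, M.E \ X)` with connectivity
`λ(X) = r(X) + r(E−X) − r(M)` at most `k − 1`, and both sides of size at least `k`. -/
def kSeparation (M : Matroid α) (X : Set α) (k : ℕ) : Prop :=
  X ⊆ M.E ∧ eRk M X + eRk M (M.E \ X) ≤ eRk M M.E + ((k - 1 : ℕ) : ℕ∞) ∧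
    (k : ℕ∞) ≤ X.encard ∧ (k : ℕ∞) ≤ (M.E \ X).encard

/-- `M` is `n`-connected if it has no `k`-separations for `0 < k < n`. -/
def NConnected (M : Matroid α) (n : ℕ) : Prop :=
  ∀ k : ℕ, 0 < k → k < n → ∀ X : Set α, ¬ kSeparation M X k

/-- `X` is 3-separating in `M`: `λ_M(X) ≤ 2`. -/
def ThreeSeparating (M : Matroid α) (X : Set α) : Prop :=
  eRk M X + eRk M (M.E \ X) ≤ eRk M M.E + 2

/-- `X` is exactly 3-separating in `M`: `λ_M(X) = 2`. -/
def ExactlyThreeSeparating (M : Matroid α) (X : Set α) : Prop :=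
  eRk M X + eRk M (M.E \ X) = eRk M M.E + 2

/-- `N` is a simplification of `M`: `N` is obtained from `M` by deleting a set of
elements, `N` has no loops or parallel pairs (no circuits of size at most two), and
every element of `M` is in the closure of the ground set of `N`. -/
def IsSimplificationOf (N M : Matroid α) : Prop :=
  (∃ D ⊆ M.E, N = del M D) ∧ (∀ C, Circuit N C → 3 ≤ C.encard) ∧
    M.closure N.E = M.E

/-- `N` is a cosimplification of `M`: `N✶` is a simplification of `M✶`. -/
def IsCosimplificationOf (N M : Matroid α) : Prop :=
  IsSimplificationOf N✶ M✶

/-- `S` is a series class of `M`: a maximal nonempty set any two distinct elements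
of which form a series pair (a two-element cocircuit). -/
def IsSeriesClass (M : Matroid α) (S : Set α) : Prop :=
  S.Nonempty ∧ S ⊆ M.E ∧ (∀ a ∈ S, ∀ b ∈ S, a ≠ b → Circuit M✶ {a, b}) ∧
    (∀ a ∈ S, ∀ f, Circuit M✶ {a, f} → a ≠ f → f ∈ S)

/-- The full closure of `X` in `M`: the intersection of all sets containing `X ∩ M.E`
that are closed in both `M` and `M✶`. -/
def fullClosure (M : Matroid α) (X : Set α) : Set α :=
  ⋂₀ {F | X ∩ M.E ⊆ F ∧ M.closure F = F ∧ M✶.closure F = F}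

end PaperDefs

open PaperDefs

/-!
Put `Y' = Y − e`. Since `λ(X) = r(X) + r(Y' ∪ e) − r(M) = 2`, the set `X ∪ e` is exactly
3-separating iff `r(X ∪ e) − r(X) = r(Y' ∪ e) − r(Y')`; both differences are `0` or `1`
according as `e` is or is not spanned, so this says `e ∈ cl(X) ↔ e ∈ cl(Y')`. On the other side,
`e ∈ cl*(A)` iff `e ∉ cl(E − A − e)`, so `e ∈ cl*(X) ∩ cl*(Y')` iff `e ∉ cl(Y') ∪ cl(X)`.
The cancellations need finite rank, which 3-connectivity provides.
-/

namespace Matroid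

variable {α : Type*} {M : Matroid α} {X Z : Set α} {e : α}

lemma eRk_insert_of_mem_closure (he : e ∈ M.closure X) : M.eRk (insert e X) = M.eRk X := by
  rw [← eRk_insert_closure_eq, insert_eq_of_mem he, eRk_closure_eq]

lemma eRk_insert_add_eRk_eq_iff (hX : M.IsRkFinite X) (hZ : M.IsRkFinite Z) (he : e ∈ M.E) :
    M.eRk (insert e X) + M.eRk Z = M.eRk X + M.eRk (insert e Z) ↔
      (e ∈ M.closure X ↔ e ∈ M.closure Z) := by
  obtain ⟨a, ha⟩ := ENat.ne_top_iff_exists.1 hX.eRk_lt_top.ne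
  obtain ⟨b, hb⟩ := ENat.ne_top_iff_exists.1 hZ.eRk_lt_top.ne
  by_cases hXe : e ∈ M.closure X <;> by_cases hZe : e ∈ M.closure Z <;>
    simp only [hXe, hZe, he, eRk_insert_of_mem_closure, eRk_insert_eq_add_one, mem_sdiff,
      not_false_eq_true, not_true_eq_false, and_self, iff_self, iff_true, iff_false, ← ha, ← hb] <;>
    norm_cast <;> omega

lemma mem_dual_closure_iff (he : e ∈ M.E) (heX : e ∉ X) :
    e ∈ M✶.closure X ↔ e ∉ M.closure ((M.E \ X) \ {e}) := by
  -- both sides say that `e` is a loop of `M✶ ／ X`, i.e. a coloop of `(M✶ ／ X)✶ = M ＼ X`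
  have h := M.restrict_isColoop_iff (R := M.E \ X) sdiff_subset (e := e)
  rw [restrict_compl, ← dual_contract_dual, dual_isColoop_iff_isLoop,
    contract_isLoop_iff_mem_closure] at h
  simpa [heX, he] using h

end Matroid

namespace PaperDefs

variable {α : Type*} {M : Matroid α} {X : Set α}

lemma eRk_eq_matroid_eRk (M : Matroid α) (X : Set α) : eRk M X = M.eRk X := by
  refine le_antisymm (iSup₂_le fun I hI ↦ hI.1.encard_le_eRk_of_subset hI.2) ?_
  obtain ⟨I, hI⟩ := M.exists_isBasis' X
  rw [← hI.encard_eq_eRk]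
  exact le_iSup₂ (f := fun I (_ : I ∈ {I | M.Indep I ∧ I ⊆ X}) ↦ I.encard) I
    ⟨hI.indep, hI.subset⟩

lemma exactlyThreeSeparating_iff :
    ExactlyThreeSeparating M X ↔ M.eRk X + M.eRk (M.E \ X) = M.eRank + 2 := by
  simp only [ExactlyThreeSeparating, eRk_eq_matroid_eRk, Matroid.eRk_ground]

lemma NConnected.rankFinite {n : ℕ} (h : NConnected M n) (hn : 1 < n) : M.RankFinite := by
  -- in infinite rank, every partition into nonempty sets is a `1`-separation
  by_contra hinf
  have htop : M.eRank = ⊤ := by simpa [Matroid.eRank_ne_top_iff] using hinf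
  have hE : M.E.Infinite := by
    rw [← encard_eq_top_iff, eq_top_iff, ← htop]
    exact M.eRank_le_encard_ground
  obtain ⟨e, he⟩ := hE.nonempty
  refine h 1 one_pos hn {e} ⟨singleton_subset_iff.2 he, ?_, by simp, ?_⟩
  · simp [eRk_eq_matroid_eRk, htop]
  · simpa using (hE.sdiff (finite_singleton e)).nonempty

end PaperDefs

theorem statement_3_general {α : Type*} (M : Matroid α) (X Y : Set α) (e : α)
    (h3 : NConnected M 3) (hu : X ∪ Y = M.E) (hd : Disjoint X Y)
    (hexact : ExactlyThreeSeparating M X) (he : e ∈ Y) :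
    ExactlyThreeSeparating M (X ∪ {e}) ↔
      (e ∈ M.closure X ∩ M.closure (Y \ {e}) ∨
        e ∈ M✶.closure X ∩ M✶.closure (Y \ {e})) := by
  have : M.RankFinite := h3.rankFinite (by norm_num)
  have heE : e ∈ M.E := hu ▸ mem_union_right X he
  have hXc : M.E \ X = Y := hd.sdiff_eq_of_sup_eq hu
  have hXec : M.E \ (X ∪ {e}) = Y \ {e} := by rw [← sdiff_sdiff, hXc]
  have hYec : (M.E \ (Y \ {e})) \ {e} = X := by
    rw [sdiff_sdiff, sdiff_union_self, union_singleton, insert_eq_of_mem he]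
    exact hd.symm.sdiff_eq_of_sup_eq (sup_comm X Y ▸ hu)
  rw [exactlyThreeSeparating_iff, hXc, ← insert_eq_of_mem he, ← insert_sdiff_singleton]
    at hexact
  rw [exactlyThreeSeparating_iff, hXec, union_singleton, ← hexact,
    Matroid.eRk_insert_add_eRk_eq_iff (M.isRkFinite_set _) (M.isRkFinite_set _) heE,
    mem_inter_iff, mem_inter_iff, Matroid.mem_dual_closure_iff heE (hd.notMem_of_mem_right he),
    hXc, Matroid.mem_dual_closure_iff heE (fun h ↦ h.2 rfl), hYec]
  tauto

/-- If `(X,Y)` is an exactly 3-separating partition of a 3-connected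
matroid `M` with `|Y| ≥ 3` and `e ∈ Y`, then `(X ∪ {e}, Y − {e})` is exactly
3-separating iff `e ∈ cl(X) ∩ cl(Y−e)` or `e ∈ cl*(X) ∩ cl*(Y−e)`. -/
theorem statement_3 {α : Type*} (M : Matroid α) (X Y : Set α) (e : α)
    (h3 : NConnected M 3) (hu : X ∪ Y = M.E) (hd : Disjoint X Y)
    (hexact : ExactlyThreeSeparating M X) (hY : 3 ≤ Y.encard) (he : e ∈ Y) :
    ExactlyThreeSeparating M (X ∪ {e}) ↔
      (e ∈ M.closure X ∩ M.closure (Y \ {e}) ∨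
        e ∈ M✶.closure X ∩ M✶.closure (Y \ {e})) :=
  statement_3_general M X Y e h3 hu hd hexact he
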